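/- arXiv:2406.13077 — 7 statements merged into one kernel-verified Lean document; each statement's English description precedes it below -/
import Mathlib

section
/- For 0 ≤ λ ≤ κ < 1, the integral (1/π)∫₀¹ du/√(u(1−u)(1−κu)(1−λu)) equals (1/√(1−λ)) · (1/π)∫₀¹ dv/√(v(1−v)(1 − ((κ−λ)/(1−λ))v)), obtained by the change of variable v = (1−λ)u/(1−λu). -/
/-!
For `λ < 1` the Möbius map `u ↦ (1 - λ) u / (1 - λ u)` is an increasing bijection of `(0, 1)`
onto itself with derivative `(1 - λ) / (1 - λ u)²`. Writing `v` for the image of `u`, one has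
`v (1 - v) (1 - μ v) = (1 - λ) u (1 - u) (1 - κ u) / (1 - λ u)³` with `μ = (κ - λ) / (1 - λ)`,
so the Jacobian turns `dv / √(v (1 - v) (1 - μ v))` into
`√(1 - λ) du / √(u (1 - u) (1 - κ u) (1 - λ u))`.
-/

open intervalIntegral Real MeasureTheory Set

noncomputable def unitIntervalMobius (l u : ℝ) : ℝ := (1 - l) * u / (1 - l * u)

namespace unitIntervalMobius

variable {l : ℝ}

lemma one_sub_mul_pos (hl : l < 1) {x : ℝ} (hx : x ∈ Ioo (0 : ℝ) 1) : 0 < 1 - l * x := by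
  nlinarith [hx.1, hx.2, mul_pos hx.1 (sub_pos.2 hl)]

lemma image_Ioo (hl : l < 1) : unitIntervalMobius l '' Ioo 0 1 = Ioo 0 1 := by
  ext y
  constructor
  · rintro ⟨x, hx, rfl⟩
    have hd := one_sub_mul_pos hl hx
    refine ⟨div_pos (mul_pos (sub_pos.2 hl) hx.1) hd, ?_⟩
    rw [unitIntervalMobius, div_lt_one hd]
    nlinarith [hx.2]
  · intro hy
    -- the inverse map is `y ↦ y / (1 - λ (1 - y))`
    have hd : 0 < 1 - l * (1 - y) := one_sub_mul_pos hl ⟨sub_pos.2 hy.2, by linarith [hy.1]⟩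
    refine ⟨y / (1 - l * (1 - y)), ⟨div_pos hy.1 hd, ?_⟩, ?_⟩
    · rw [div_lt_one hd]
      nlinarith [mul_pos (sub_pos.2 hy.2) (sub_pos.2 hl)]
    · have hl' : 1 - l ≠ 0 := (sub_pos.2 hl).ne'
      have hden : 1 - l * (y / (1 - l * (1 - y))) = (1 - l) / (1 - l * (1 - y)) := by
        field_simp
        ring
      rw [unitIntervalMobius, hden]
      field_simp

lemma injOn_Ioo (hl : l < 1) : InjOn (unitIntervalMobius l) (Ioo 0 1) := by
  intro a ha b hb h
  have hda := (one_sub_mul_pos hl ha).ne'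
  have hdb := (one_sub_mul_pos hl hb).ne'
  have hl' : 1 - l ≠ 0 := (sub_pos.2 hl).ne'
  rw [unitIntervalMobius, unitIntervalMobius, div_eq_div_iff hda hdb] at h
  have : (1 - l) * (a - b) = 0 := by linear_combination h
  simpa [hl', sub_eq_zero] using this

lemma hasDerivAt {x : ℝ} (hx : 1 - l * x ≠ 0) :
    HasDerivAt (unitIntervalMobius l) ((1 - l) / (1 - l * x) ^ 2) x := by
  have hnum : HasDerivAt (fun u : ℝ => (1 - l) * u) (1 - l) x := by
    simpa using (hasDerivAt_id x).const_mul (1 - l)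
  have hden : HasDerivAt (fun u : ℝ => 1 - l * u) (-l) x := by
    simpa using ((hasDerivAt_id x).const_mul l).const_sub 1
  exact (hnum.div hden hx).congr_deriv (by ring)

lemma mul_one_sub_mul_one_sub_mul (k : ℝ) (hl : l ≠ 1) {x : ℝ} (hx : 1 - l * x ≠ 0) :
    let v := unitIntervalMobius l x
    v * (1 - v) * (1 - (k - l) / (1 - l) * v)
      = (1 - l) * (x * (1 - x) * (1 - k * x)) / (1 - l * x) ^ 3 := by
  have hl' : 1 - l ≠ 0 := sub_ne_zero.2 hl.symm
  simp only [unitIntervalMobius]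
  field_simp
  ring

lemma jacobian_mul_integrand (k : ℝ) (hl : l < 1) {x : ℝ} (hx : x ∈ Ioo (0 : ℝ) 1) :
    let v := unitIntervalMobius l x
    |(1 - l) / (1 - l * x) ^ 2| * (1 / √(v * (1 - v) * (1 - (k - l) / (1 - l) * v)))
      = √(1 - l) * (1 / √(x * (1 - x) * (1 - k * x) * (1 - l * x))) := by
  have hd := one_sub_mul_pos hl hx
  have hl' := sub_pos.2 hl
  have hjac : 0 < (1 - l) / (1 - l * x) ^ 2 := by positivity
  simp only
  rw [mul_one_sub_mul_one_sub_mul k hl.ne hd.ne', abs_of_pos hjac, one_div, one_div,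
    ← sqrt_inv, ← sqrt_inv, ← sqrt_sq hjac.le, ← sqrt_mul (sq_nonneg _), ← sqrt_mul hl'.le]
  congr 1
  -- no sign condition on `k` is needed: `r` enters only through `r⁻¹`, so `r = 0` is harmless
  generalize x * (1 - x) * (1 - k * x) = r
  field_simp

end unitIntervalMobius

open unitIntervalMobius in
lemma setIntegral_Ioo_change_modulus (k : ℝ) {l : ℝ} (hl : l < 1) :
    ∫ v in Ioo (0 : ℝ) 1, 1 / √(v * (1 - v) * (1 - (k - l) / (1 - l) * v))
      = √(1 - l) * ∫ u in Ioo (0 : ℝ) 1, 1 / √(u * (1 - u) * (1 - k * u) * (1 - l * u)) := by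
  have hderiv : ∀ x ∈ Ioo (0 : ℝ) 1, HasDerivWithinAt (unitIntervalMobius l)
      ((1 - l) / (1 - l * x) ^ 2) (Ioo 0 1) x :=
    fun x hx => (hasDerivAt (one_sub_mul_pos hl hx).ne').hasDerivWithinAt
  rw [← MeasureTheory.integral_const_mul]
  conv_lhs => rw [← image_Ioo hl]
  rw [integral_image_eq_integral_abs_deriv_smul measurableSet_Ioo hderiv (injOn_Ioo hl)]
  exact setIntegral_congr_fun measurableSet_Ioo fun x hx => jacobian_mul_integrand k hl hx

theorem stmt_4_general (κ lam : ℝ) (hlk : lam ≤ κ) (hκ1 : κ < 1) :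
    (1 / π) * ∫ u in (0:ℝ)..1,
        1 / Real.sqrt (u * (1 - u) * (1 - κ * u) * (1 - lam * u))
      = (1 / Real.sqrt (1 - lam)) * ((1 / π) * ∫ v in (0:ℝ)..1,
          1 / Real.sqrt (v * (1 - v) * (1 - ((κ - lam) / (1 - lam)) * v))) := by
  have hl : lam < 1 := hlk.trans_lt hκ1
  have hsqrt : √(1 - lam) ≠ 0 := (sqrt_pos.2 (sub_pos.2 hl)).ne'
  simp only [integral_of_le zero_le_one, integral_Ioc_eq_integral_Ioo,
    setIntegral_Ioo_change_modulus κ hl]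
  rw [mul_left_comm, one_div (√_), inv_mul_cancel_left₀ hsqrt]

theorem stmt_4 (κ lam : ℝ) (hlam : 0 ≤ lam) (hlk : lam ≤ κ) (hκ1 : κ < 1) :
    (1 / π) * ∫ u in (0:ℝ)..1,
        1 / Real.sqrt (u * (1 - u) * (1 - κ * u) * (1 - lam * u))
      = (1 / Real.sqrt (1 - lam)) * ((1 / π) * ∫ v in (0:ℝ)..1,
          1 / Real.sqrt (v * (1 - v) * (1 - ((κ - lam) / (1 - lam)) * v))) :=
  stmt_4_general κ lam hlk hκ1
end

section
/- For 0 ≤ k² < 1, define m via the series F(x) = Σ_{n≥0} ((1/2)_n)²/(n!)² xⁿ for |x| < 1 (Gauss hypergeometric ₂F₁(1/2,1/2,1;x)). Then ∫₀^{π/2} dφ/√(1 − k² sin²φ) = (π/2)·F(k²). -/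
/-!
Put `c n = (1/2)_n / n!`. These are the coefficients of the binomial series
`(1 - x)^(-1/2) = ∑ c n xⁿ`, and also the Wallis ratios
`∫₀^{π/2} sin^{2n} φ dφ = (π/2) c n`. Expanding the integrand as
`∑ c n k^{2n} sin^{2n} φ`, a series of nonnegative continuous functions, and integrating
termwise therefore gives `(π/2) ∑ c n² k^{2n}`.
-/

open intervalIntegral Real

noncomputable def wallisCoeff (n : ℕ) : ℝ := (ascPochhammer ℝ n).eval (1 / 2) / n.factorial

lemma wallisCoeff_succ (n : ℕ) :
    wallisCoeff (n + 1) = wallisCoeff n * ((2 * n + 1) / (2 * n + 2)) := by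
  rw [wallisCoeff, wallisCoeff, ascPochhammer_succ_eval, Nat.factorial_succ]
  push_cast
  field_simp
  ring

lemma wallisCoeff_nonneg (n : ℕ) : 0 ≤ wallisCoeff n := by
  induction n with
  | zero => simp [wallisCoeff]
  | succ n ih => rw [wallisCoeff_succ]; positivity

lemma ringChoose_eq_wallisCoeff (n : ℕ) : Ring.choose (1 / 2 + n - 1 : ℝ) n = wallisCoeff n := by
  rw [Ring.choose_eq_smul, Polynomial.descPochhammer_smeval_eq_ascPochhammer,
    Polynomial.ascPochhammer_smeval_eq_eval, wallisCoeff, smul_eq_mul, inv_mul_eq_div]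
  ring_nf

lemma hasSum_wallisCoeff_mul_pow {x : ℝ} (hx : |x| < 1) :
    HasSum (fun n ↦ wallisCoeff n * x ^ n) (1 / √(1 - x)) := by
  have h := (one_div_one_sub_rpow_hasFPowerSeriesOnBall_zero (1 / 2)).hasSum
    (y := x) (by simpa [enorm_eq_nnnorm, ← NNReal.coe_lt_coe] using hx)
  simp only [FormalMultilinearSeries.ofScalars_apply_eq, smul_eq_mul, zero_add,
    ringChoose_eq_wallisCoeff, ← sqrt_eq_rpow] at h
  exact h

lemma integral_sin_pow_two_mul (n : ℕ) :
    ∫ x in (0)..(π / 2), sin x ^ (2 * n) = π / 2 * wallisCoeff n := by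
  induction n with
  | zero => simp [wallisCoeff]
  | succ n ih =>
    rw [mul_add_one, integral_sin_pow, ih, wallisCoeff_succ, sin_zero, cos_pi_div_two]
    push_cast
    ring

theorem hasSum_intervalIntegral_of_nonneg {μ : MeasureTheory.Measure ℝ} {F : ℕ → ℝ → ℝ}
    {f : ℝ → ℝ} {a b : ℝ} (hF : ∀ n, Continuous (F n)) (hF_nonneg : ∀ n t, 0 ≤ F n t)
    (hf : IntervalIntegrable f μ a b) (hsum : ∀ t, HasSum (fun n ↦ F n t) (f t)) :
    HasSum (fun n ↦ ∫ t in a..b, F n t ∂μ) (∫ t in a..b, f t ∂μ) := by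
  refine hasSum_integral_of_dominated_convergence F (fun n ↦ (hF n).aestronglyMeasurable)
    (fun n ↦ .of_forall fun t _ ↦ (Real.norm_of_nonneg (hF_nonneg n t)).le)
    (.of_forall fun t _ ↦ (hsum t).summable) ?_ (.of_forall fun t _ ↦ hsum t)
  simpa only [fun t ↦ (hsum t).tsum_eq] using hf

lemma sq_mul_sin_sq_lt_one {k : ℝ} (hk : k ^ 2 < 1) (φ : ℝ) : k ^ 2 * sin φ ^ 2 < 1 := by
  nlinarith [sin_sq_le_one φ, sq_nonneg k]

lemma hasSum_one_div_sqrt_one_sub_mul_sin_sq {k : ℝ} (hk : k ^ 2 < 1) (φ : ℝ) :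
    HasSum (fun n ↦ wallisCoeff n * (k ^ 2) ^ n * sin φ ^ (2 * n))
      (1 / √(1 - k ^ 2 * sin φ ^ 2)) := by
  have hx : |k ^ 2 * sin φ ^ 2| < 1 := by
    rw [abs_of_nonneg (by positivity)]
    exact sq_mul_sin_sq_lt_one hk φ
  simpa only [mul_pow, pow_mul, mul_assoc] using hasSum_wallisCoeff_mul_pow hx

theorem stmt_6_general (k : ℝ) (hk1 : k ^ 2 < 1) :
    (∫ φ in (0:ℝ)..(π / 2), 1 / Real.sqrt (1 - k ^ 2 * Real.sin φ ^ 2))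
      = (π / 2) * ∑' n : ℕ,
          ((ascPochhammer ℝ n).eval (1/2 : ℝ)) ^ 2 / (Nat.factorial n : ℝ) ^ 2 * (k ^ 2) ^ n := by
  have hterm (n : ℕ) : ∫ φ in (0:ℝ)..(π / 2), wallisCoeff n * (k ^ 2) ^ n * sin φ ^ (2 * n)
      = π / 2 * ((ascPochhammer ℝ n).eval (1/2 : ℝ) ^ 2 / (n.factorial : ℝ) ^ 2 * (k ^ 2) ^ n) := by
    rw [integral_const_mul, integral_sin_pow_two_mul, wallisCoeff]
    ring
  have hcont : Continuous fun φ ↦ 1 / √(1 - k ^ 2 * sin φ ^ 2) :=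
    continuous_const.div (by fun_prop)
      fun φ ↦ (sqrt_pos.2 (sub_pos.2 (sq_mul_sin_sq_lt_one hk1 φ))).ne'
  have hsum := hasSum_intervalIntegral_of_nonneg (μ := MeasureTheory.volume)
    (fun n ↦ by fun_prop)
    (fun n φ ↦ mul_nonneg (mul_nonneg (wallisCoeff_nonneg n) (by positivity))
      (Even.pow_nonneg (even_two_mul n) _))
    (hcont.intervalIntegrable 0 (π / 2)) (hasSum_one_div_sqrt_one_sub_mul_sin_sq hk1)
  simp only [hterm] at hsum
  rw [← hsum.tsum_eq, tsum_mul_left]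

theorem stmt_6 (k : ℝ) (hk : 0 ≤ k) (hk1 : k ^ 2 < 1) :
    (∫ φ in (0:ℝ)..(π / 2), 1 / Real.sqrt (1 - k ^ 2 * Real.sin φ ^ 2))
      = (π / 2) * ∑' n : ℕ,
          ((ascPochhammer ℝ n).eval (1/2 : ℝ)) ^ 2 / (Nat.factorial n : ℝ) ^ 2 * (k ^ 2) ^ n :=
  stmt_6_general k hk1
end

section
/- For 0 ≤ x < 1 and 0 ≤ y < 1, the double series F₁(x,y) = Σ_{m,n≥0} (1/2)_{m+n}(1/2)_m(1/2)_n / ((1)_{m+n} m! n!) x^m y^n converges absolutely, and equals (1/π)∫₀¹ du/√(u(1−u)(1−xu)(1−yu)). -/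
/-!
Expand `1 / √(1 - x u) · 1 / √(1 - y u)` as the product of two binomial series with
coefficients `(1/2)_m / m!` and integrate term by term against the arcsine weight
`1 / √(u (1 - u))`. The beta integral
`∫₀¹ u^k / √(u (1 - u)) du = B(k + 1/2, 1/2) = π (1/2)_k / k!`
produces the remaining factor `(1/2)_{m+n} / (m+n)!`. All terms are nonnegative and bounded by
`x^m y^n`, which justifies the interchange of sum and integral.
-/

open intervalIntegral Real

open Polynomial Nat MeasureTheory Set

theorem ascPochhammer_eval_div_factorial_eq_choose (a : ℝ) (n : ℕ) :
    (ascPochhammer ℝ n).eval a / n ! = Ring.choose (a + n - 1) n := by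
  rw [Ring.choose_eq_smul, Polynomial.descPochhammer_smeval_eq_ascPochhammer,
    Polynomial.ascPochhammer_smeval_cast, Polynomial.ascPochhammer_smeval_eq_eval, smul_eq_mul]
  ring_nf

theorem hasSum_ascPochhammer_div_factorial_mul_pow (a : ℝ) {t : ℝ} (ht : |t| < 1) :
    HasSum (fun n => (ascPochhammer ℝ n).eval a / n ! * t ^ n) (1 / (1 - t) ^ a) := by
  have := (Real.one_div_one_sub_rpow_hasFPowerSeriesOnBall_zero a).hasSum
    (y := t) (by simpa [enorm_eq_nnnorm, ← NNReal.coe_lt_coe] using ht)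
  simpa [FormalMultilinearSeries.ofScalars_apply_eq, ascPochhammer_eval_div_factorial_eq_choose,
    mul_comm] using this

theorem ascPochhammer_eval_le_factorial {a : ℝ} (ha0 : 0 ≤ a) (ha1 : a ≤ 1) (n : ℕ) :
    (ascPochhammer ℝ n).eval a ≤ n ! := by
  induction n with
  | zero => simp
  | succ n ih =>
    rw [ascPochhammer_succ_right, eval_mul, factorial_succ]
    push_cast
    simp only [eval_add, eval_X, eval_natCast]
    rw [mul_comm ((n:ℝ)+1)]
    exact mul_le_mul ih (by linarith) (by positivity) (by positivity)

theorem Real.Gamma_add_nat_eq_ascPochhammer_mul {a : ℝ} (ha : 0 < a) (n : ℕ) :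
    Gamma (a + n) = (ascPochhammer ℝ n).eval a * Gamma a := by
  induction n with
  | zero => simp
  | succ n ih =>
    rw [Nat.cast_succ, ← add_assoc, Gamma_add_one (by positivity : (0:ℝ) < a + n).ne', ih,
      ascPochhammer_succ_right, eval_mul]
    simp only [eval_add, eval_X, eval_natCast]
    ring

theorem eqOn_ofReal_betaIntegrand (a b : ℝ) :
    EqOn (fun u : ℝ => ((u ^ (a - 1) * (1 - u) ^ (b - 1) : ℝ) : ℂ))
      (fun u : ℝ => (u : ℂ) ^ ((a : ℂ) - 1) * (1 - (u : ℂ)) ^ ((b : ℂ) - 1)) (uIcc 0 1) := by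
  intro u hu
  rw [uIcc_of_le zero_le_one] at hu
  push_cast
  rw [Complex.ofReal_cpow hu.1, Complex.ofReal_cpow (sub_nonneg.2 hu.2)]
  push_cast
  rfl

theorem Complex.betaIntegral_ofReal (a b : ℝ) :
    Complex.betaIntegral a b = ↑(∫ u in (0:ℝ)..1, u ^ (a - 1) * (1 - u) ^ (b - 1)) := by
  rw [Complex.betaIntegral, ← intervalIntegral.integral_ofReal]
  exact (intervalIntegral.integral_congr (eqOn_ofReal_betaIntegrand a b)).symm

theorem intervalIntegrable_rpow_mul_one_sub_rpow {a b : ℝ} (ha : 0 < a) (hb : 0 < b) :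
    IntervalIntegrable (fun u : ℝ => u ^ (a - 1) * (1 - u) ^ (b - 1)) volume 0 1 := by
  have h := (Complex.betaIntegral_convergent (u := a) (v := b) (by simpa) (by simpa)).congr_uIoo
    ((eqOn_ofReal_betaIntegrand a b).symm.mono uIoo_subset_uIcc_self)
  rw [intervalIntegrable_iff_integrableOn_Ioc_of_le zero_le_one] at h ⊢
  exact h.re

theorem integral_rpow_mul_one_sub_rpow {a b : ℝ} (ha : 0 < a) (hb : 0 < b) :
    ∫ u in (0:ℝ)..1, u ^ (a - 1) * (1 - u) ^ (b - 1) = Gamma a * Gamma b / Gamma (a + b) := by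
  rw [← ProbabilityTheory.beta, ProbabilityTheory.beta_eq_betaIntegralReal a b ha hb,
    Complex.betaIntegral_ofReal, Complex.ofReal_re]

noncomputable def invSqrtCoeff (m : ℕ) : ℝ := (ascPochhammer ℝ m).eval (1 / 2) / m !

theorem invSqrtCoeff_nonneg (m : ℕ) : 0 ≤ invSqrtCoeff m :=
  div_nonneg (ascPochhammer_pos m _ (by norm_num)).le (by positivity)

theorem invSqrtCoeff_le_one (m : ℕ) : invSqrtCoeff m ≤ 1 :=
  div_le_one_of_le₀ (ascPochhammer_eval_le_factorial (by norm_num) (by norm_num) m) (by positivity)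

theorem hasSum_invSqrtCoeff_mul_pow {t : ℝ} (ht : |t| < 1) :
    HasSum (fun m => invSqrtCoeff m * t ^ m) (1 / √(1 - t)) := by
  rw [sqrt_eq_rpow]
  exact hasSum_ascPochhammer_div_factorial_mul_pow _ ht

theorem hasSum_invSqrtCoeff_mul_pow_mul {s t : ℝ} (hs : |s| < 1) (ht : |t| < 1) :
    HasSum (fun p : ℕ × ℕ => invSqrtCoeff p.1 * s ^ p.1 * (invSqrtCoeff p.2 * t ^ p.2))
      (1 / √(1 - s) * (1 / √(1 - t))) := by
  have norm_summable {r : ℝ} (hr : |r| < 1) : Summable fun m => ‖invSqrtCoeff m * r ^ m‖ := by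
    simpa [abs_mul, abs_of_nonneg (invSqrtCoeff_nonneg _)] using
      (hasSum_invSqrtCoeff_mul_pow (t := |r|) (by rwa [abs_abs])).summable
  exact HasSum.mul (f := fun m => invSqrtCoeff m * s ^ m) (g := fun n => invSqrtCoeff n * t ^ n)
    (hasSum_invSqrtCoeff_mul_pow hs) (hasSum_invSqrtCoeff_mul_pow ht)
    (summable_mul_of_summable_norm (norm_summable hs) (norm_summable ht))

theorem eqOn_pow_div_sqrt (k : ℕ) :
    EqOn (fun u : ℝ => u ^ k / √(u * (1 - u)))
      (fun u : ℝ => u ^ ((1 / 2 + k : ℝ) - 1) * (1 - u) ^ ((1 / 2 : ℝ) - 1)) (Ioo 0 1) := by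
  intro u ⟨hu0, hu1⟩
  have h1u : 0 < 1 - u := sub_pos.2 hu1
  dsimp only
  rw [sqrt_mul hu0.le, sqrt_eq_rpow, sqrt_eq_rpow,
    show (1 / 2 + k : ℝ) - 1 = k + -(1 / 2) by ring, show (1 / 2 : ℝ) - 1 = -(1 / 2) by norm_num,
    rpow_add hu0, rpow_natCast, rpow_neg hu0.le, rpow_neg h1u.le]
  ring

theorem intervalIntegrable_pow_div_sqrt (k : ℕ) :
    IntervalIntegrable (fun u : ℝ => u ^ k / √(u * (1 - u))) volume 0 1 :=
  (intervalIntegrable_rpow_mul_one_sub_rpow (by positivity : (0:ℝ) < 1 / 2 + k)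
    one_half_pos).congr_uIoo (by rw [uIoo_of_le zero_le_one]; exact (eqOn_pow_div_sqrt k).symm)

theorem integral_pow_div_sqrt (k : ℕ) :
    ∫ u in (0:ℝ)..1, u ^ k / √(u * (1 - u)) = π * invSqrtCoeff k := by
  rw [intervalIntegral.integral_congr_Ioo_of_le zero_le_one (eqOn_pow_div_sqrt k),
    integral_rpow_mul_one_sub_rpow (by positivity : (0:ℝ) < 1 / 2 + k) one_half_pos,
    Gamma_add_nat_eq_ascPochhammer_mul one_half_pos, show 1 / 2 + k + 1 / 2 = (k : ℝ) + 1 by ring,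
    Gamma_nat_eq_factorial, Gamma_one_half_eq, invSqrtCoeff]
  field_simp
  rw [sq_sqrt pi_pos.le]

noncomputable def appellF1Term (x y : ℝ) (p : ℕ × ℕ) : ℝ :=
  invSqrtCoeff (p.1 + p.2) * (invSqrtCoeff p.1 * x ^ p.1) * (invSqrtCoeff p.2 * y ^ p.2)

theorem appellF1Term_eq (x y : ℝ) (p : ℕ × ℕ) :
    (ascPochhammer ℝ (p.1 + p.2)).eval (1/2 : ℝ) * (ascPochhammer ℝ p.1).eval (1/2 : ℝ)
        * (ascPochhammer ℝ p.2).eval (1/2 : ℝ)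
        / ((ascPochhammer ℝ (p.1 + p.2)).eval (1 : ℝ)
            * (Nat.factorial p.1 : ℝ) * (Nat.factorial p.2 : ℝ))
        * x ^ p.1 * y ^ p.2 = appellF1Term x y p := by
  rw [ascPochhammer_eval_one, appellF1Term, invSqrtCoeff, invSqrtCoeff, invSqrtCoeff]
  ring

theorem summable_appellF1Term {x y : ℝ} (hx : 0 ≤ x) (hx1 : x < 1) (hy : 0 ≤ y) (hy1 : y < 1) :
    Summable (appellF1Term x y) := by
  have hgeom : Summable fun p : ℕ × ℕ => x ^ p.1 * y ^ p.2 :=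
    (summable_geometric_of_lt_one hx hx1).mul_of_nonneg (summable_geometric_of_lt_one hy hy1)
      (pow_nonneg hx) (pow_nonneg hy)
  refine hgeom.of_nonneg_of_le (fun p => ?_) (fun p => ?_)
  · have := invSqrtCoeff_nonneg (p.1 + p.2)
    have := invSqrtCoeff_nonneg p.1
    have := invSqrtCoeff_nonneg p.2
    unfold appellF1Term
    positivity
  · calc appellF1Term x y p
        = invSqrtCoeff (p.1 + p.2) * invSqrtCoeff p.1 * invSqrtCoeff p.2
            * (x ^ p.1 * y ^ p.2) := by
          unfold appellF1Term; ring
      _ ≤ 1 * 1 * 1 * (x ^ p.1 * y ^ p.2) := by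
          gcongr <;> first | exact invSqrtCoeff_nonneg _ | exact invSqrtCoeff_le_one _
      _ = x ^ p.1 * y ^ p.2 := by ring

noncomputable def appellF1Integrand (x y : ℝ) (p : ℕ × ℕ) (u : ℝ) : ℝ :=
  invSqrtCoeff p.1 * (x * u) ^ p.1 * (invSqrtCoeff p.2 * (y * u) ^ p.2) / √(u * (1 - u))

theorem appellF1Integrand_eq (x y : ℝ) (p : ℕ × ℕ) :
    appellF1Integrand x y p = fun u =>
      invSqrtCoeff p.1 * x ^ p.1 * (invSqrtCoeff p.2 * y ^ p.2)
        * (u ^ (p.1 + p.2) / √(u * (1 - u))) := by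
  ext u
  rw [appellF1Integrand, mul_pow, mul_pow, pow_add]
  ring

theorem intervalIntegrable_appellF1Integrand (x y : ℝ) (p : ℕ × ℕ) :
    IntervalIntegrable (appellF1Integrand x y p) volume 0 1 := by
  rw [appellF1Integrand_eq]
  exact (intervalIntegrable_pow_div_sqrt _).const_mul _

theorem integral_appellF1Integrand (x y : ℝ) (p : ℕ × ℕ) :
    ∫ u in (0:ℝ)..1, appellF1Integrand x y p u = π * appellF1Term x y p := by
  rw [appellF1Integrand_eq, intervalIntegral.integral_const_mul, integral_pow_div_sqrt,
    appellF1Term]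
  ring

theorem appellF1Integrand_nonneg {x y : ℝ} (hx : 0 ≤ x) (hy : 0 ≤ y) (p : ℕ × ℕ) {u : ℝ}
    (hu : 0 ≤ u) : 0 ≤ appellF1Integrand x y p u := by
  have := invSqrtCoeff_nonneg p.1
  have := invSqrtCoeff_nonneg p.2
  unfold appellF1Integrand
  positivity

theorem hasSum_appellF1Integrand {x y : ℝ} (hx : |x| < 1) (hy : |y| < 1) {u : ℝ}
    (hu : u ∈ Ioo 0 1) :
    HasSum (fun p => appellF1Integrand x y p u)
      (1 / √(u * (1 - u) * (1 - x * u) * (1 - y * u))) := by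
  obtain ⟨hu0, hu1⟩ := hu
  have hmul {r : ℝ} (hr : |r| < 1) : |r * u| < 1 := by
    rw [abs_mul, abs_of_pos hu0]; nlinarith [abs_nonneg r]
  have h1u : 0 ≤ u * (1 - u) := by nlinarith
  have hxu : 0 ≤ 1 - x * u := by linarith [(abs_lt.1 (hmul hx)).2]
  have hsqrt : 1 / √(1 - x * u) * (1 / √(1 - y * u)) / √(u * (1 - u))
      = 1 / √(u * (1 - u) * (1 - x * u) * (1 - y * u)) := by
    rw [sqrt_mul (mul_nonneg h1u hxu), sqrt_mul h1u]
    ring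
  rw [← hsqrt]
  exact (hasSum_invSqrtCoeff_mul_pow_mul (hmul hx) (hmul hy)).div_const _

theorem hasSum_pi_mul_appellF1Term {x y : ℝ} (hx : 0 ≤ x) (hx1 : x < 1) (hy : 0 ≤ y)
    (hy1 : y < 1) :
    HasSum (fun p => π * appellF1Term x y p)
      (∫ u in (0:ℝ)..1, 1 / √(u * (1 - u) * (1 - x * u) * (1 - y * u))) := by
  have hintegrable (p : ℕ × ℕ) : IntegrableOn (appellF1Integrand x y p) (Ioc 0 1) :=
    (intervalIntegrable_iff_integrableOn_Ioc_of_le zero_le_one).1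
      (intervalIntegrable_appellF1Integrand x y p)
  have hintegral (p : ℕ × ℕ) :
      ∫ u in Ioc 0 1, appellF1Integrand x y p u = π * appellF1Term x y p := by
    rw [← intervalIntegral.integral_of_le zero_le_one, integral_appellF1Integrand]
  have hnorm (p : ℕ × ℕ) :
      ∫ u in Ioc 0 1, ‖appellF1Integrand x y p u‖ = π * appellF1Term x y p := by
    rw [← hintegral]
    exact setIntegral_congr_fun measurableSet_Ioc fun u hu =>
      norm_of_nonneg (appellF1Integrand_nonneg hx hy p hu.1.le)
  have h := hasSum_integral_of_summable_integral_norm hintegrable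
    (by simpa only [hnorm] using (summable_appellF1Term hx hx1 hy hy1).mul_left π)
  have hsum_eq : ∫ u in (0:ℝ)..1, 1 / √(u * (1 - u) * (1 - x * u) * (1 - y * u))
      = ∫ u in Ioc 0 1, ∑' p, appellF1Integrand x y p u := by
    rw [intervalIntegral.integral_of_le zero_le_one, integral_Ioc_eq_integral_Ioo,
      integral_Ioc_eq_integral_Ioo]
    exact setIntegral_congr_fun measurableSet_Ioo fun u hu => (hasSum_appellF1Integrand
      (by rwa [abs_of_nonneg hx]) (by rwa [abs_of_nonneg hy]) hu).tsum_eq.symm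
  simp only [hintegral] at h
  rwa [hsum_eq]

theorem stmt_7 (x y : ℝ) (hx : 0 ≤ x) (hx1 : x < 1) (hy : 0 ≤ y) (hy1 : y < 1) :
    Summable (fun p : ℕ × ℕ =>
      (ascPochhammer ℝ (p.1 + p.2)).eval (1/2 : ℝ) * (ascPochhammer ℝ p.1).eval (1/2 : ℝ)
        * (ascPochhammer ℝ p.2).eval (1/2 : ℝ)
        / ((ascPochhammer ℝ (p.1 + p.2)).eval (1 : ℝ)
            * (Nat.factorial p.1 : ℝ) * (Nat.factorial p.2 : ℝ))
        * x ^ p.1 * y ^ p.2) ∧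
    (∑' p : ℕ × ℕ,
      (ascPochhammer ℝ (p.1 + p.2)).eval (1/2 : ℝ) * (ascPochhammer ℝ p.1).eval (1/2 : ℝ)
        * (ascPochhammer ℝ p.2).eval (1/2 : ℝ)
        / ((ascPochhammer ℝ (p.1 + p.2)).eval (1 : ℝ)
            * (Nat.factorial p.1 : ℝ) * (Nat.factorial p.2 : ℝ))
        * x ^ p.1 * y ^ p.2)
      = (1 / π) * ∫ u in (0:ℝ)..1,
          1 / Real.sqrt (u * (1 - u) * (1 - x * u) * (1 - y * u)) := by
  have h := (hasSum_pi_mul_appellF1Term hx hx1 hy hy1).div_const π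
  simp only [mul_div_cancel_left₀ _ pi_ne_zero] at h
  simp only [appellF1Term_eq]
  exact ⟨h.summable, by rw [h.tsum_eq]; ring⟩
end

section
/- For 0 < y ≤ x < 1, Appell's function F₁(1/2,{1/2,1/2},1; x, y) = (1/√(1−y)) · ₂F₁(1/2,1/2,1; (x−y)/(1−y)), where both sides are defined by their Euler integral representations: F₁ = (1/π)∫₀¹ du/√(u(1−u)(1−xu)(1−yu)) and ₂F₁(1/2,1/2,1;z) = (1/π)∫₀¹ du/√(u(1−u)(1−zu)). -/
/-!
The substitution `v = (1 - y) u / (1 - y u)` maps `[0, 1]` increasingly onto itself, with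
`dv = (1 - y) / (1 - y u)² du` and
`v (1 - v) (1 - z v) = (1 - y) u (1 - u) (1 - x u) / (1 - y u)³` for `z = (x - y) / (1 - y)`.
Hence it carries the integrand of `₂F₁` to `√(1 - y)` times the integrand of `F₁`.
-/

open intervalIntegral Real Set MeasureTheory

noncomputable def unitMoebius (y u : ℝ) : ℝ := (1 - y) * u / (1 - y * u)

lemma one_sub_mul_pos_of_mem_Icc {y u : ℝ} (hy : y < 1) (hu : u ∈ Icc (0:ℝ) 1) :
    0 < 1 - y * u := by
  rcases le_or_gt 0 y with h | h
  · nlinarith [mul_le_mul_of_nonneg_left hu.2 h]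
  · nlinarith [mul_nonpos_of_nonpos_of_nonneg h.le hu.1]

lemma hasDerivAt_unitMoebius {y u : ℝ} (hu : 1 - y * u ≠ 0) :
    HasDerivAt (unitMoebius y) ((1 - y) / (1 - y * u) ^ 2) u := by
  have h := ((hasDerivAt_id u).const_mul (1 - y)).div
    (((hasDerivAt_id u).const_mul y).const_sub 1) hu
  exact h.congr_deriv (by simp only [id]; field_simp; ring)

/-- No integrability hypothesis is needed: if `g` is not integrable, both sides are `0`. -/
lemma integral_unitInterval_comp_unitMoebius {E : Type*} [NormedAddCommGroup E]
    [NormedSpace ℝ E] {y : ℝ} (hy : y < 1) (g : ℝ → E) :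
    ∫ v in (0:ℝ)..1, g v
      = ∫ u in (0:ℝ)..1, ((1 - y) / (1 - y * u) ^ 2) • g (unitMoebius y u) := by
  have hpos : ∀ u ∈ Icc (0:ℝ) 1, 0 < 1 - y * u := fun u hu => one_sub_mul_pos_of_mem_Icc hy hu
  have hcont : ContinuousOn (unitMoebius y) (Icc 0 1) := fun u hu =>
    (hasDerivAt_unitMoebius (hpos u hu).ne').continuousAt.continuousWithinAt
  have hsubst := integral_Icc_deriv_smul_of_deriv_nonneg (g := g) hcont
    (fun u hu => hasDerivAt_unitMoebius (hpos u (Ioo_subset_Icc_self hu)).ne')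
    (fun u _ => div_nonneg (by linarith) (sq_nonneg _)) zero_le_one
  have h0 : unitMoebius y 0 = 0 := by simp [unitMoebius]
  have h1 : unitMoebius y 1 = 1 := by simp [unitMoebius, (by linarith : 1 - y ≠ 0)]
  rw [h0, h1] at hsubst
  rw [integral_of_le zero_le_one, integral_of_le zero_le_one, ← integral_Icc_eq_integral_Ioc,
    ← integral_Icc_eq_integral_Ioc, hsubst]

lemma unitMoebius_mul_one_sub_mul_one_sub (x : ℝ) {y u : ℝ} (hy : y ≠ 1) (hu : 1 - y * u ≠ 0) :
    unitMoebius y u * (1 - unitMoebius y u) * (1 - (x - y) / (1 - y) * unitMoebius y u)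
      = (1 - y) * (u * (1 - u) * (1 - x * u)) / (1 - y * u) ^ 3 := by
  have : 1 - y ≠ 0 := sub_ne_zero.mpr hy.symm
  simp only [unitMoebius]
  field_simp
  ring

lemma deriv_unitMoebius_mul_integrand (x : ℝ) {y u : ℝ} (hy : y < 1) (hu : 0 < 1 - y * u) :
    (1 - y) / (1 - y * u) ^ 2 * (1 / √(unitMoebius y u * (1 - unitMoebius y u) *
        (1 - (x - y) / (1 - y) * unitMoebius y u)))
      = √(1 - y) * (1 / √(u * (1 - u) * (1 - x * u) * (1 - y * u))) := by
  have he : 0 < 1 - y := by linarith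
  rw [unitMoebius_mul_one_sub_mul_one_sub x hy.ne hu.ne',
    mul_comm (u * (1 - u) * (1 - x * u)) (1 - y * u), sqrt_div' _ (by positivity),
    sqrt_mul he.le, sqrt_mul hu.le]
  obtain ⟨s, hs0, hs⟩ : ∃ s, 0 < s ∧ 1 - y * u = s ^ 2 :=
    ⟨√(1 - y * u), sqrt_pos.2 hu, (sq_sqrt hu.le).symm⟩
  obtain ⟨e, he0, he⟩ : ∃ e, 0 < e ∧ 1 - y = e ^ 2 :=
    ⟨√(1 - y), sqrt_pos.2 he, (sq_sqrt he.le).symm⟩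
  rw [hs, he, show (s ^ 2) ^ 3 = (s ^ 3) ^ 2 by ring, sqrt_sq (pow_pos hs0 3).le,
    sqrt_sq hs0.le, sqrt_sq he0.le]
  field_simp

theorem stmt_8_general (x y : ℝ) (hyx : y ≤ x) (hx1 : x < 1) :
    (1 / π) * ∫ u in (0:ℝ)..1,
        1 / Real.sqrt (u * (1 - u) * (1 - x * u) * (1 - y * u))
      = (1 / Real.sqrt (1 - y)) * ((1 / π) * ∫ u in (0:ℝ)..1,
          1 / Real.sqrt (u * (1 - u) * (1 - ((x - y) / (1 - y)) * u))) := by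
  have hy : y < 1 := hyx.trans_lt hx1
  have hsubst : ∫ v in (0:ℝ)..1, 1 / √(v * (1 - v) * (1 - (x - y) / (1 - y) * v))
      = √(1 - y) * ∫ u in (0:ℝ)..1, 1 / √(u * (1 - u) * (1 - x * u) * (1 - y * u)) := by
    rw [integral_unitInterval_comp_unitMoebius hy, ← intervalIntegral.integral_const_mul]
    refine integral_congr fun u hu => deriv_unitMoebius_mul_integrand x hy ?_
    exact one_sub_mul_pos_of_mem_Icc hy (by rwa [uIcc_of_le zero_le_one] at hu)
  have hsqrt : √(1 - y) ≠ 0 := (sqrt_pos.2 (by linarith)).ne'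
  rw [hsubst, mul_left_comm _ (√(1 - y)), ← mul_assoc, one_div_mul_cancel hsqrt, one_mul]

theorem stmt_8 (x y : ℝ) (hy : 0 < y) (hyx : y ≤ x) (hx1 : x < 1) :
    (1 / π) * ∫ u in (0:ℝ)..1,
        1 / Real.sqrt (u * (1 - u) * (1 - x * u) * (1 - y * u))
      = (1 / Real.sqrt (1 - y)) * ((1 / π) * ∫ u in (0:ℝ)..1,
          1 / Real.sqrt (u * (1 - u) * (1 - ((x - y) / (1 - y)) * u))) :=
  stmt_8_general x y hyx hx1
end

section
/- Landen's transformation: for 0 ≤ k₀ < 1 with k₁ = (1 − √(1−k₀²))/(1 + √(1−k₀²)), one has K(k₀) = (1 + k₁)·K(k₁), where K(k) = ∫₀^{π/2} dφ/√(1 − k²sin²φ). -/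
open intervalIntegral Real

/-! Gauss's substitution `sin θ = (1 + k) sin φ / (1 + k sin² φ)` maps `[0, π/2]` onto itself.
When `k₀² (1 + k)² = 4k` it turns `1 - k₀² sin² θ` into the perfect square
`((1 - k sin² φ) / (1 + k sin² φ))²`, while `dθ = (1 + k)(1 - k sin² φ) / ((1 + k sin² φ) √(1 - k² sin² φ)) dφ`;
the factors `1 ± k sin² φ` cancel and leave `(1 + k) dφ / √(1 - k² sin² φ)`. The modulus
`k₁ = (1 - √(1 - k₀²)) / (1 + √(1 - k₀²))` is the solution of `k₀² (1 + k)² = 4k` in `[0, 1)`. -/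

noncomputable def landenMap (k φ : ℝ) : ℝ := (1 + k) * sin φ / (1 + k * sin φ ^ 2)

lemma one_sub_sq_mul_sin_sq_pos {m : ℝ} (hm : m ^ 2 < 1) (φ : ℝ) :
    0 < 1 - m ^ 2 * sin φ ^ 2 := by
  nlinarith [sin_sq_le_one φ, sq_nonneg (sin φ)]

lemma one_sub_mul_sin_sq_pos {k : ℝ} (hk : k < 1) (φ : ℝ) : 0 < 1 - k * sin φ ^ 2 := by
  nlinarith [sin_sq_le_one φ, mul_nonneg (sub_nonneg.2 hk.le) (sq_nonneg (sin φ)),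
    mul_nonneg (sub_nonneg.2 hk.le) (sub_nonneg.2 (sin_sq_le_one φ))]

lemma continuous_one_div_sqrt_one_sub_sq_mul_sin_sq {m : ℝ} (hm : m ^ 2 < 1) :
    Continuous fun φ => 1 / sqrt (1 - m ^ 2 * sin φ ^ 2) :=
  continuous_const.div (by fun_prop) fun φ => (sqrt_pos.2 (one_sub_sq_mul_sin_sq_pos hm φ)).ne'

namespace landenMap

variable {k : ℝ}

lemma one_add_mul_sin_sq_pos (hk : 0 ≤ k) (φ : ℝ) : 0 < 1 + k * sin φ ^ 2 := by
  positivity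

lemma map_zero : landenMap k 0 = 0 := by
  simp [landenMap]

lemma map_pi_div_two (hk : 0 ≤ k) : landenMap k (π / 2) = 1 := by
  simp [landenMap, (by linarith : 1 + k ≠ 0)]

lemma continuous (hk : 0 ≤ k) : Continuous (landenMap k) :=
  Continuous.div (by fun_prop) (by fun_prop) fun φ => (one_add_mul_sin_sq_pos hk φ).ne'

lemma one_sub_sq (hk : 0 ≤ k) (φ : ℝ) :
    1 - landenMap k φ ^ 2
      = cos φ ^ 2 * (1 - k ^ 2 * sin φ ^ 2) / (1 + k * sin φ ^ 2) ^ 2 := by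
  have := (one_add_mul_sin_sq_pos hk φ).ne'
  rw [landenMap, cos_sq']
  field_simp
  ring

lemma one_sub_sq_mul_sq {m : ℝ} (hk : 0 ≤ k) (hm : m ^ 2 * (1 + k) ^ 2 = 4 * k) (φ : ℝ) :
    1 - m ^ 2 * landenMap k φ ^ 2 = ((1 - k * sin φ ^ 2) / (1 + k * sin φ ^ 2)) ^ 2 := by
  have := (one_add_mul_sin_sq_pos hk φ).ne'
  rw [landenMap]
  field_simp
  linear_combination (-sin φ ^ 2) * hm

lemma sq_le_one (hk0 : 0 ≤ k) (hk1 : k < 1) (φ : ℝ) : landenMap k φ ^ 2 ≤ 1 := by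
  have hQ := one_sub_sq_mul_sin_sq_pos (m := k) (by nlinarith) φ
  have : 0 ≤ cos φ ^ 2 * (1 - k ^ 2 * sin φ ^ 2) / (1 + k * sin φ ^ 2) ^ 2 := by positivity
  linarith [one_sub_sq hk0 φ]

lemma hasDerivAt (hk : 0 ≤ k) (φ : ℝ) :
    HasDerivAt (landenMap k)
      ((1 + k) * cos φ * (1 - k * sin φ ^ 2) / (1 + k * sin φ ^ 2) ^ 2) φ := by
  have hnum : HasDerivAt (fun ψ => (1 + k) * sin ψ) ((1 + k) * cos φ) φ :=
    (hasDerivAt_sin φ).const_mul _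
  have hden : HasDerivAt (fun ψ => 1 + k * sin ψ ^ 2) (k * (2 * sin φ * cos φ)) φ := by
    simpa using (((hasDerivAt_sin φ).pow 2).const_mul k).const_add 1
  refine (hnum.div hden (one_add_mul_sin_sq_pos hk φ).ne').congr_deriv ?_
  field_simp
  ring

lemma hasDerivAt_arcsin (hk0 : 0 ≤ k) (hk1 : k < 1) {φ : ℝ} (hφ : φ ∈ Set.Ioo 0 (π / 2)) :
    HasDerivAt (fun ψ => arcsin (landenMap k ψ))
      ((1 + k) * (1 - k * sin φ ^ 2) / ((1 + k * sin φ ^ 2) * sqrt (1 - k ^ 2 * sin φ ^ 2))) φ := by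
  have hcos : 0 < cos φ := cos_pos_of_mem_Ioo ⟨by linarith [hφ.1, pi_pos], hφ.2⟩
  have hD := one_add_mul_sin_sq_pos hk0 φ
  have hQ := one_sub_sq_mul_sin_sq_pos (m := k) (by nlinarith) φ
  have hsqrt : sqrt (1 - landenMap k φ ^ 2)
      = cos φ * sqrt (1 - k ^ 2 * sin φ ^ 2) / (1 + k * sin φ ^ 2) := by
    rw [one_sub_sq hk0, ← sqrt_sq (by positivity : 0 ≤ cos φ * sqrt (1 - k ^ 2 * sin φ ^ 2)
      / (1 + k * sin φ ^ 2)), div_pow, mul_pow, sq_sqrt hQ.le]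
  have hlt : landenMap k φ ^ 2 < 1 := by
    have : 0 < cos φ ^ 2 * (1 - k ^ 2 * sin φ ^ 2) / (1 + k * sin φ ^ 2) ^ 2 := by positivity
    linarith [one_sub_sq hk0 φ]
  obtain ⟨hneg, hone⟩ := abs_lt.mp (sq_lt_one_iff_abs_lt_one _ |>.mp hlt)
  refine ((Real.hasDerivAt_arcsin hneg.ne' hone.ne).comp φ (hasDerivAt hk0 φ)).congr_deriv ?_
  rw [hsqrt]
  field_simp

lemma jacobian_mul_integrand_arcsin {m : ℝ} (hk0 : 0 ≤ k) (hk1 : k < 1)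
    (hm : m ^ 2 * (1 + k) ^ 2 = 4 * k) (φ : ℝ) :
    (1 + k) * (1 - k * sin φ ^ 2) / ((1 + k * sin φ ^ 2) * sqrt (1 - k ^ 2 * sin φ ^ 2))
        * (1 / sqrt (1 - m ^ 2 * sin (arcsin (landenMap k φ)) ^ 2))
      = (1 + k) * (1 / sqrt (1 - k ^ 2 * sin φ ^ 2)) := by
  have hN := one_sub_mul_sin_sq_pos hk1 φ
  have hD := one_add_mul_sin_sq_pos hk0 φ
  have hQ := one_sub_sq_mul_sin_sq_pos (m := k) (by nlinarith) φ
  obtain ⟨hneg, hone⟩ := abs_le.mp (sq_le_one_iff_abs_le_one _ |>.mp (sq_le_one hk0 hk1 φ))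
  rw [sin_arcsin hneg hone, one_sub_sq_mul_sq hk0 hm, sqrt_sq (div_nonneg hN.le hD.le)]
  have := (sqrt_pos.2 hQ).ne'
  field_simp

end landenMap

open landenMap in
theorem integral_one_div_sqrt_one_sub_sq_mul_sin_sq_landen {k m : ℝ} (hk0 : 0 ≤ k) (hk1 : k < 1)
    (hm : m ^ 2 * (1 + k) ^ 2 = 4 * k) :
    (∫ φ in (0:ℝ)..(π / 2), 1 / sqrt (1 - m ^ 2 * sin φ ^ 2))
      = (1 + k) * ∫ φ in (0:ℝ)..(π / 2), 1 / sqrt (1 - k ^ 2 * sin φ ^ 2) := by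
  have hm1 : m ^ 2 < 1 := by nlinarith
  have hD := one_add_mul_sin_sq_pos hk0
  have hQ := one_sub_sq_mul_sin_sq_pos (m := k) (by nlinarith)
  have hpi : (0:ℝ) ≤ π / 2 := by positivity
  have hsub := integral_deriv_smul_comp'' (a := 0) (b := π / 2)
    (f := fun ψ => arcsin (landenMap k ψ))
    (f' := fun φ => (1 + k) * (1 - k * sin φ ^ 2)
      / ((1 + k * sin φ ^ 2) * sqrt (1 - k ^ 2 * sin φ ^ 2)))
    (g := fun θ => 1 / sqrt (1 - m ^ 2 * sin θ ^ 2))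
    (continuous_arcsin.comp (continuous hk0)).continuousOn
    (fun φ hφ => by
      rw [min_eq_left hpi, max_eq_right hpi] at hφ
      exact (hasDerivAt_arcsin hk0 hk1 hφ).hasDerivWithinAt)
    (Continuous.div (by fun_prop) (by fun_prop)
      fun φ => (mul_pos (hD φ) (sqrt_pos.2 (hQ φ))).ne').continuousOn
    (continuous_one_div_sqrt_one_sub_sq_mul_sin_sq hm1).continuousOn
  simp only [map_zero, arcsin_zero, map_pi_div_two hk0, arcsin_one] at hsub
  rw [← hsub, ← integral_const_mul]
  exact integral_congr fun φ _ => jacobian_mul_integrand_arcsin hk0 hk1 hm φ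

theorem stmt_11 (k₀ : ℝ) (hk : 0 ≤ k₀) (hk1 : k₀ < 1)
    (k₁ : ℝ) (hk₁ : k₁ = (1 - Real.sqrt (1 - k₀ ^ 2)) / (1 + Real.sqrt (1 - k₀ ^ 2))) :
    (∫ φ in (0:ℝ)..(π / 2), 1 / Real.sqrt (1 - k₀ ^ 2 * Real.sin φ ^ 2))
      = (1 + k₁) * ∫ φ in (0:ℝ)..(π / 2), 1 / Real.sqrt (1 - k₁ ^ 2 * Real.sin φ ^ 2) := by
  set c := sqrt (1 - k₀ ^ 2)
  have hc2 : c ^ 2 = 1 - k₀ ^ 2 := sq_sqrt (by nlinarith)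
  have hc0 : 0 < c := sqrt_pos.2 (by nlinarith)
  have hc1 : c ≤ 1 := by nlinarith
  refine integral_one_div_sqrt_one_sub_sq_mul_sin_sq_landen ?_ ?_ ?_ <;> rw [hk₁]
  · exact div_nonneg (by linarith) (by linarith)
  · rw [div_lt_one (by linarith)]
    linarith
  · field_simp
    linear_combination 4 * hc2
end

section
/- For ξ, η ∈ (0,1) with η < ξ, the next-step parameters κ₁ = ((1−ξη)/((1+ξ)(1+η)))² and λ₁ = (ξ−η)²/(2(1+ξ)(1+η)(ξ+η)) satisfy 0 ≤ λ₁ < κ₁ < 1. -/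
theorem stmt_16 (ξ η : ℝ) (hη0 : 0 < η) (hηξ : η < ξ) (hξ1 : ξ < 1)
    (κ₁ lam₁ : ℝ)
    (hκ₁ : κ₁ = ((1 - ξ * η) / ((1 + ξ) * (1 + η))) ^ 2)
    (hlam₁ : lam₁ = (ξ - η) ^ 2 / (2 * (1 + ξ) * (1 + η) * (ξ + η))) :
    0 ≤ lam₁ ∧ lam₁ < κ₁ ∧ κ₁ < 1 := by
  have hξ0 : 0 < ξ := hη0.trans hηξ
  have hη1 : η < 1 := hηξ.trans hξ1
  have hD : (0:ℝ) < (1 + ξ) * (1 + η) := by nlinarith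
  have hS : (0:ℝ) < ξ + η := by linarith
  have hm : (0:ℝ) < 1 - ξ * η := by nlinarith
  refine ⟨?_, ?_, ?_⟩
  · rw [hlam₁]; positivity
  · rw [hκ₁, hlam₁, div_pow, div_lt_div_iff₀ (by positivity) (by positivity)]
    have hE : 0 < (2 + ξ + η) * ((1 - ξ) * (1 - η)) * (2 * ξ * η + ξ + η) := by
      have h1 : (0:ℝ) < 1 - ξ := by linarith
      have h2 : (0:ℝ) < 1 - η := by linarith
      have h3 : (0:ℝ) < 2 * ξ * η + ξ + η := by nlinarith
      have h4 : (0:ℝ) < 2 + ξ + η := by linarith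
      positivity
    nlinarith [mul_pos hE hD, mul_pos hD hD, mul_pos hD hS]
  · rw [hκ₁]
    have h1 : (1 - ξ * η) / ((1 + ξ) * (1 + η)) < 1 := by
      rw [div_lt_one hD]; nlinarith
    have h0 : 0 ≤ (1 - ξ * η) / ((1 + ξ) * (1 + η)) := by positivity
    nlinarith
end

section
/- One-step invariance: let a₀ > b₀ > c₀ > 0 with a₀ > b₀ + c₀, and let κ₀, λ₀ be determined by (1−κ₀)(1−λ₀) = (b₀/a₀)², κ₀λ₀ = (c₀/a₀)² with 0 < λ₀ < κ₀ < 1. Define κ₁, λ₁ from ξ = (b₀+c₀)/a₀, η = (b₀−c₀)/a₀ by κ₁ = ((1−ξη)/((1+ξ)(1+η)))², λ₁ = (ξ−η)²/(2(1+ξ)(1+η)(ξ+η)), and a₁ = a₀(√(1−λ₀)+√(1−κ₀))/(2√(1−λ₁)). Then (1/a₀)∫₀¹ du/√(u(1−u)(1−κ₀u)(1−λ₀u)) = (1/a₁)∫₀¹ du/√(u(1−u)(1−κ₁u)(1−λ₁u)). -/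
/-! Substituting `u = 1 / (1 + t²)` turns `(1/a) ∫₀¹ du / √(u(1-u)(1-κu)(1-λu))`
into `2 ∫₀^∞ dt / √((t² + p²)(t² + q²))` with `p = a√(1-κ)`, `q = a√(1-λ)`.
Gauss's substitution `t ↦ (t - pq/t)/2` shows that this integral does not change when
`(p, q)` is replaced by its arithmetic and geometric means, and `κ₁, λ₁, a₁` are chosen
so that `a₁√(1-λ₁) = (p + q)/2` and `a₁²(1-κ₁) = pq`. -/

open Real MeasureTheory Set

theorem integral_image_eq_const_mul_of_hasDerivWithinAt {s S : Set ℝ} {f f' g h : ℝ → ℝ}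
    {c : ℝ} (hs : MeasurableSet s) (hf' : ∀ t ∈ s, HasDerivWithinAt f (f' t) s t)
    (hf : InjOn f s) (hfs : f '' s = S) (hgh : ∀ t ∈ s, |f' t| * g (f t) = c * h t) :
    ∫ x in S, g x = c * ∫ t in s, h t := by
  rw [← hfs, integral_image_eq_integral_abs_deriv_smul hs hf' hf g,
    ← MeasureTheory.integral_const_mul]
  exact setIntegral_congr_fun hs hgh

noncomputable def agmIntegral (x y : ℝ) : ℝ :=
  ∫ t in Ioi (0 : ℝ), 1 / √((t ^ 2 + x) * (t ^ 2 + y))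

theorem agmIntegral_comm (x y : ℝ) : agmIntegral x y = agmIntegral y x := by
  simp only [agmIntegral, mul_comm]

theorem agmIntegral_sq_mul {c : ℝ} (hc : 0 < c) (x y : ℝ) :
    agmIntegral (c ^ 2 * x) (c ^ 2 * y) = c⁻¹ * agmIntegral x y := by
  have hsub := integral_comp_mul_left_Ioi
    (fun s => 1 / √((s ^ 2 + c ^ 2 * x) * (s ^ 2 + c ^ 2 * y))) 0 hc
  have hpt (t : ℝ) : 1 / √(((c * t) ^ 2 + c ^ 2 * x) * ((c * t) ^ 2 + c ^ 2 * y))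
      = c⁻¹ ^ 2 * (1 / √((t ^ 2 + x) * (t ^ 2 + y))) := by
    rw [show ((c * t) ^ 2 + c ^ 2 * x) * ((c * t) ^ 2 + c ^ 2 * y)
        = (c ^ 2) ^ 2 * ((t ^ 2 + x) * (t ^ 2 + y)) by ring,
      sqrt_mul (by positivity), sqrt_sq (by positivity)]
    field_simp
  simp only [hpt, MeasureTheory.integral_const_mul, mul_zero, smul_eq_mul] at hsub
  field_simp at hsub
  rw [agmIntegral, agmIntegral, hsub, inv_mul_cancel_left₀ hc.ne']

theorem agmIntegral_sq_sq_eq_mean_sq_mul {p q : ℝ} (hp : 0 < p) (hq : 0 < q) :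
    agmIntegral (p ^ 2) (q ^ 2) = agmIntegral (((p + q) / 2) ^ 2) (p * q) := by
  set h : ℝ → ℝ := fun s => 1 / √((s ^ 2 + ((p + q) / 2) ^ 2) * (s ^ 2 + p * q)) with hh
  have hpq : 0 < p * q := mul_pos hp hq
  have hder (t : ℝ) (ht : 0 < t) : HasDerivWithinAt (fun t => (t - p * q * t⁻¹) / 2)
      ((t ^ 2 + p * q) / (2 * t ^ 2)) (Ioi 0) t := by
    have hinv := (hasDerivAt_inv ht.ne').const_mul (p * q)
    refine ((((hasDerivAt_id' t).sub hinv).div_const 2).congr_deriv ?_).hasDerivWithinAt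
    field_simp
    ring
  have hmono : StrictMonoOn (fun t => (t - p * q * t⁻¹) / 2) (Ioi 0) := by
    intro s hs t ht hst
    simp only [mem_Ioi] at hs ht
    dsimp only
    gcongr
  have himg : (fun t => (t - p * q * t⁻¹) / 2) '' Ioi 0 = univ := by
    refine eq_univ_of_forall fun s => ?_
    have habs : |s| < √(s ^ 2 + p * q) := by
      rw [← sqrt_sq_eq_abs]; exact sqrt_lt_sqrt (sq_nonneg s) (by linarith)
    have hpos : 0 < s + √(s ^ 2 + p * q) := by linarith [neg_abs_le s]
    refine ⟨s + √(s ^ 2 + p * q), hpos, ?_⟩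
    have hr := sq_sqrt (by positivity : 0 ≤ s ^ 2 + p * q)
    field_simp
    linear_combination hr
  have hpt (t : ℝ) (ht : 0 < t) :
      |(t ^ 2 + p * q) / (2 * t ^ 2)| * h ((t - p * q * t⁻¹) / 2)
        = 2 * (1 / √((t ^ 2 + p ^ 2) * (t ^ 2 + q ^ 2))) := by
    have hprod : (((t - p * q * t⁻¹) / 2) ^ 2 + ((p + q) / 2) ^ 2)
          * (((t - p * q * t⁻¹) / 2) ^ 2 + p * q)
        = ((t ^ 2 + p * q) / (4 * t ^ 2)) ^ 2 * ((t ^ 2 + p ^ 2) * (t ^ 2 + q ^ 2)) := by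
      field_simp
      ring
    have : 0 < √((t ^ 2 + p ^ 2) * (t ^ 2 + q ^ 2)) := by positivity
    simp only [hh]
    rw [hprod, sqrt_mul (by positivity), sqrt_sq (by positivity), abs_of_pos (by positivity)]
    field_simp
    ring
  have hsubst := integral_image_eq_const_mul_of_hasDerivWithinAt measurableSet_Ioi hder
    hmono.injOn himg hpt
  have heven : ∫ s, h s = 2 * ∫ s in Ioi 0, h s := by
    simpa only [hh, sq_abs] using integral_comp_abs (f := h)
  rw [setIntegral_univ, heven] at hsubst
  exact (mul_left_cancel₀ two_ne_zero hsubst).symm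

theorem integral_unitInterval_eq_two_mul_agmIntegral {κ lam : ℝ} (hκ : κ < 1)
    (hlam : lam < 1) :
    ∫ u in (0 : ℝ)..1, 1 / √(u * (1 - u) * (1 - κ * u) * (1 - lam * u))
      = 2 * agmIntegral (1 - κ) (1 - lam) := by
  set g : ℝ → ℝ := fun u => 1 / √(u * (1 - u) * (1 - κ * u) * (1 - lam * u)) with hg
  have hder (t : ℝ) (_ : t ∈ Ioi 0) : HasDerivWithinAt (fun t => (1 + t ^ 2)⁻¹)
      (-(2 * t) / (1 + t ^ 2) ^ 2) (Ioi 0) t :=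
    ((((hasDerivAt_pow 2 t).const_add 1).inv (by positivity)).congr_deriv
      (by simp)).hasDerivWithinAt
  have hanti : StrictAntiOn (fun t : ℝ => (1 + t ^ 2)⁻¹) (Ioi 0) := by
    intro s hs t ht hst
    simp only [mem_Ioi] at hs ht
    dsimp only
    gcongr
  have himg : (fun t : ℝ => (1 + t ^ 2)⁻¹) '' Ioi 0 = Ioo 0 1 := by
    ext u
    constructor
    · rintro ⟨t, ht, rfl⟩
      exact ⟨by positivity, inv_lt_one_of_one_lt₀ (by nlinarith [mem_Ioi.mp ht])⟩
    · rintro ⟨hu0, hu1⟩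
      have hpos : 0 < u⁻¹ - 1 := by rw [sub_pos]; exact one_lt_inv₀ hu0 |>.mpr hu1
      refine ⟨√(u⁻¹ - 1), sqrt_pos.mpr hpos, ?_⟩
      simp [sq_sqrt hpos.le]
  have hpt (t : ℝ) (ht : 0 < t) : |-(2 * t) / (1 + t ^ 2) ^ 2| * g (1 + t ^ 2)⁻¹
      = 2 * (1 / √((t ^ 2 + (1 - κ)) * (t ^ 2 + (1 - lam)))) := by
    have hprod : (1 + t ^ 2)⁻¹ * (1 - (1 + t ^ 2)⁻¹) * (1 - κ * (1 + t ^ 2)⁻¹)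
        * (1 - lam * (1 + t ^ 2)⁻¹)
        = (t / (1 + t ^ 2) ^ 2) ^ 2 * ((t ^ 2 + (1 - κ)) * (t ^ 2 + (1 - lam))) := by
      field_simp
      ring
    have : 0 < √((t ^ 2 + (1 - κ)) * (t ^ 2 + (1 - lam))) :=
      sqrt_pos.mpr (by nlinarith)
    simp only [hg]
    rw [hprod, sqrt_mul (by positivity), sqrt_sq (by positivity), abs_div, abs_neg,
      abs_of_pos (by positivity), abs_of_pos (by positivity)]
    field_simp
  rw [intervalIntegral.integral_of_le zero_le_one, integral_Ioc_eq_integral_Ioo,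
    integral_image_eq_const_mul_of_hasDerivWithinAt measurableSet_Ioi hder hanti.injOn himg hpt]
  rfl

theorem one_div_mul_integral_unitInterval {a κ lam : ℝ} (ha : 0 < a) (hκ : κ < 1)
    (hlam : lam < 1) :
    1 / a * ∫ u in (0 : ℝ)..1, 1 / √(u * (1 - u) * (1 - κ * u) * (1 - lam * u))
      = 2 * agmIntegral (a ^ 2 * (1 - κ)) (a ^ 2 * (1 - lam)) := by
  rw [integral_unitInterval_eq_two_mul_agmIntegral hκ hlam, agmIntegral_sq_mul ha]
  ring

theorem one_div_mul_integral_unitInterval_landen {a κ lam a' κ' lam' : ℝ} (ha : 0 < a)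
    (ha' : 0 < a') (hκ : κ < 1) (hlam : lam < 1)
    (hmean : a' ^ 2 * (1 - lam') = ((a * √(1 - κ) + a * √(1 - lam)) / 2) ^ 2)
    (hgeom : a' ^ 2 * (1 - κ') = a * √(1 - κ) * (a * √(1 - lam))) :
    1 / a * ∫ u in (0 : ℝ)..1, 1 / √(u * (1 - u) * (1 - κ * u) * (1 - lam * u))
      = 1 / a' * ∫ u in (0 : ℝ)..1, 1 / √(u * (1 - u) * (1 - κ' * u) * (1 - lam' * u)) := by
  have hp : 0 < a * √(1 - κ) := mul_pos ha (sqrt_pos.mpr (by linarith))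
  have hq : 0 < a * √(1 - lam) := mul_pos ha (sqrt_pos.mpr (by linarith))
  have hκ' : κ' < 1 := by
    have : 0 < a' ^ 2 * (1 - κ') := by rw [hgeom]; positivity
    linarith [pos_of_mul_pos_right this (sq_nonneg a')]
  have hlam' : lam' < 1 := by
    have : 0 < a' ^ 2 * (1 - lam') := by rw [hmean]; positivity
    linarith [pos_of_mul_pos_right this (sq_nonneg a')]
  rw [one_div_mul_integral_unitInterval ha hκ hlam,
    one_div_mul_integral_unitInterval ha' hκ' hlam', agmIntegral_comm (a' ^ 2 * _), hmean, hgeom,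
    ← agmIntegral_sq_sq_eq_mean_sq_mul hp hq, mul_pow, mul_pow,
    sq_sqrt (by linarith), sq_sqrt (by linarith)]

noncomputable def landenKappa (ξ η : ℝ) : ℝ := ((1 - ξ * η) / ((1 + ξ) * (1 + η))) ^ 2

noncomputable def landenLam (ξ η : ℝ) : ℝ :=
  (ξ - η) ^ 2 / (2 * (1 + ξ) * (1 + η) * (ξ + η))

theorem landenLam_lt_one {ξ η : ℝ} (hξ : 0 < ξ) (hη : 0 < η) : landenLam ξ η < 1 := by
  rw [landenLam, div_lt_one (by positivity)]
  nlinarith [mul_pos hξ hη, mul_pos (mul_pos hξ hη) (add_pos hξ hη)]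

theorem mul_one_sub_landenKappa {ξ η : ℝ} (hξ : 0 < ξ) (hη : 0 < η) :
    (1 + ξ) * (1 + η) * (1 - landenKappa ξ η) = 2 * (ξ + η) * (1 - landenLam ξ η) := by
  rw [landenKappa, landenLam]
  field_simp
  ring

theorem sqrt_one_sub_mul_sqrt_one_sub {κ lam b : ℝ} (hκ : κ ≤ 1) (hb : 0 ≤ b)
    (h : (1 - κ) * (1 - lam) = b ^ 2) : √(1 - κ) * √(1 - lam) = b := by
  rw [← sqrt_mul (by linarith), h, sqrt_sq hb]

theorem sq_sqrt_one_sub_add_sqrt_one_sub {κ lam b c : ℝ} (hκ : κ ≤ 1) (hlam : lam ≤ 1)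
    (hb : 0 ≤ b) (h₁ : (1 - κ) * (1 - lam) = b ^ 2) (h₂ : κ * lam = c ^ 2) :
    (√(1 - κ) + √(1 - lam)) ^ 2 = (1 + (b + c)) * (1 + (b - c)) := by
  rw [add_sq, mul_assoc, sqrt_one_sub_mul_sqrt_one_sub hκ hb h₁, sq_sqrt (by linarith),
    sq_sqrt (by linarith)]
  linear_combination h₁ - h₂

theorem stmt_17_general (a₀ b₀ c₀ : ℝ) (hc : 0 < c₀) (hcb : c₀ < b₀)
    (habc : a₀ > b₀ + c₀)
    (κ₀ lam₀ : ℝ) (h1 : (1 - κ₀) * (1 - lam₀) = (b₀ / a₀) ^ 2)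
    (h2 : κ₀ * lam₀ = (c₀ / a₀) ^ 2) (h4 : lam₀ < κ₀) (h5 : κ₀ < 1)
    (ξ η : ℝ) (hξ : ξ = (b₀ + c₀) / a₀) (hη : η = (b₀ - c₀) / a₀)
    (κ₁ lam₁ a₁ : ℝ)
    (hκ₁ : κ₁ = ((1 - ξ * η) / ((1 + ξ) * (1 + η))) ^ 2)
    (hlam₁ : lam₁ = (ξ - η) ^ 2 / (2 * (1 + ξ) * (1 + η) * (ξ + η)))
    (ha₁ : a₁ = a₀ * (Real.sqrt (1 - lam₀) + Real.sqrt (1 - κ₀)) / (2 * Real.sqrt (1 - lam₁))) :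
    (1 / a₀) * (∫ u in (0:ℝ)..1,
        1 / Real.sqrt (u * (1 - u) * (1 - κ₀ * u) * (1 - lam₀ * u)))
      = (1 / a₁) * ∫ u in (0:ℝ)..1,
          1 / Real.sqrt (u * (1 - u) * (1 - κ₁ * u) * (1 - lam₁ * u)) := by
  have ha : 0 < a₀ := by linarith
  have hb : 0 < b₀ := by linarith
  have hξ0 : 0 < ξ := by rw [hξ]; exact div_pos (by linarith) ha
  have hη0 : 0 < η := by rw [hη]; exact div_pos (by linarith) ha
  change κ₁ = landenKappa ξ η at hκ₁
  change lam₁ = landenLam ξ η at hlam₁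
  have hlam₁1 : 0 < 1 - lam₁ := sub_pos.mpr (hlam₁ ▸ landenLam_lt_one hξ0 hη0)
  have hmodulus := mul_one_sub_landenKappa hξ0 hη0
  rw [← hκ₁, ← hlam₁] at hmodulus
  have hgeom := sqrt_one_sub_mul_sqrt_one_sub h5.le (by positivity) h1
  have hmean : (√(1 - κ₀) + √(1 - lam₀)) ^ 2 = (1 + ξ) * (1 + η) := by
    rw [hξ, hη, add_div, sub_div]
    exact sq_sqrt_one_sub_add_sqrt_one_sub h5.le (by linarith) (by positivity) h1 h2
  have ha₁pos : 0 < a₁ := by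
    have : 0 < √(1 - κ₀) := sqrt_pos.mpr (by linarith)
    rw [ha₁]
    positivity
  have ha₁sq : a₁ ^ 2 * (1 - lam₁) = a₀ ^ 2 * ((1 + ξ) * (1 + η)) / 4 := by
    rw [ha₁, div_pow, mul_pow, mul_pow, sq_sqrt hlam₁1.le, add_comm (√(1 - lam₀)), hmean]
    field_simp
    norm_num
  refine one_div_mul_integral_unitInterval_landen ha ha₁pos h5 (by linarith) ?_ ?_
  · rw [ha₁sq, ← hmean]
    ring
  · have hsum : ξ + η = 2 * (b₀ / a₀) := by rw [hξ, hη]; ring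
    refine mul_left_cancel₀ (by positivity : (1 + ξ) * (1 + η) ≠ 0) ?_
    linear_combination a₁ ^ 2 * hmodulus
      + 2 * (ξ + η) * ha₁sq - (1 + ξ) * (1 + η) * a₀ ^ 2 * hgeom
      + (1 + ξ) * (1 + η) * a₀ ^ 2 / 2 * hsum

theorem stmt_17 (a₀ b₀ c₀ : ℝ) (hc : 0 < c₀) (hcb : c₀ < b₀) (hba : b₀ < a₀)
    (habc : a₀ > b₀ + c₀)
    (κ₀ lam₀ : ℝ) (h1 : (1 - κ₀) * (1 - lam₀) = (b₀ / a₀) ^ 2)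
    (h2 : κ₀ * lam₀ = (c₀ / a₀) ^ 2) (h3 : 0 < lam₀) (h4 : lam₀ < κ₀) (h5 : κ₀ < 1)
    (ξ η : ℝ) (hξ : ξ = (b₀ + c₀) / a₀) (hη : η = (b₀ - c₀) / a₀)
    (κ₁ lam₁ a₁ : ℝ)
    (hκ₁ : κ₁ = ((1 - ξ * η) / ((1 + ξ) * (1 + η))) ^ 2)
    (hlam₁ : lam₁ = (ξ - η) ^ 2 / (2 * (1 + ξ) * (1 + η) * (ξ + η)))
    (ha₁ : a₁ = a₀ * (Real.sqrt (1 - lam₀) + Real.sqrt (1 - κ₀)) / (2 * Real.sqrt (1 - lam₁))) :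
    (1 / a₀) * (∫ u in (0:ℝ)..1,
        1 / Real.sqrt (u * (1 - u) * (1 - κ₀ * u) * (1 - lam₀ * u)))
      = (1 / a₁) * ∫ u in (0:ℝ)..1,
          1 / Real.sqrt (u * (1 - u) * (1 - κ₁ * u) * (1 - lam₁ * u)) :=
  stmt_17_general a₀ b₀ c₀ hc hcb habc κ₀ lam₀ h1 h2 h4 h5 ξ η hξ hη κ₁ lam₁ a₁ hκ₁ hlam₁ ha₁
end
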